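/- arXiv:2509.03780 — 7 statements merged into one kernel-verified Lean document; each statement's English description precedes it below -/
import Mathlib

section
/- For finite random variables X and Y with joint distribution P, the KL divergence D_KL(P[X=x, Y=y, Y'=y'] || P[X=x]·P[Y=y|X=x]·P[Y'=y'|X=x]), where the left distribution places Y'=Y with probability 1 (i.e., P[X=x,Y=y,Y'=y'] = P[X=x,Y=y]·I[y=y']), equals the conditional entropy H(Y|X). -/
open scoped Classical BigOperators

noncomputable section

/-- Probability of an event under a mass function `p` on a finite sample space. -/
def prob {Ω : Type*} [Fintype Ω] (p : Ω → ℝ) (E : Ω → Prop) : ℝ :=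
  ∑ ω, if E ω then p ω else 0

/-- KL divergence between two mass functions on a finite type. -/
def KL {γ : Type*} [Fintype γ] (P Q : γ → ℝ) : ℝ :=
  ∑ z, P z * Real.log (P z / Q z)

/-- Conditional Shannon entropy H(Y|X) (in nats). -/
def condEnt {Ω α β : Type*} [Fintype Ω] [Fintype α] [Fintype β]
    (p : Ω → ℝ) (X : Ω → α) (Y : Ω → β) : ℝ :=
  -∑ x, ∑ y, prob p (fun ω => X ω = x ∧ Y ω = y) *
      Real.log (prob p (fun ω => X ω = x ∧ Y ω = y) / prob p (fun ω => X ω = x))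

/-- The approximation error of the diagram `Y ← X → Y` (with the true joint putting
the two copies of `Y` equal almost surely, and the factored distribution being
`P[X=x]·P[Y=y|X=x]·P[Y'=y'|X=x]`) equals the conditional entropy `H(Y|X)`. -/
theorem dkl_of_copy_diagram_eq_condEnt
    {Ω α β : Type*} [Fintype Ω] [Fintype α] [Fintype β]
    (p : Ω → ℝ) (hp : ∀ ω, 0 ≤ p ω) (hsum : ∑ ω, p ω = 1)
    (X : Ω → α) (Y : Ω → β) :
    KL
      (fun t : α × β × β =>
        prob p (fun ω => X ω = t.1 ∧ Y ω = t.2.1) * (if t.2.1 = t.2.2 then (1 : ℝ) else 0))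
      (fun t : α × β × β =>
        prob p (fun ω => X ω = t.1) *
          (prob p (fun ω => X ω = t.1 ∧ Y ω = t.2.1) / prob p (fun ω => X ω = t.1)) *
          (prob p (fun ω => X ω = t.1 ∧ Y ω = t.2.2) / prob p (fun ω => X ω = t.1)))
      = condEnt p X Y := by
  classical
  have hnn : ∀ E : Ω → Prop, 0 ≤ prob p E := fun E =>
    Finset.sum_nonneg fun ω _ => by split <;> [exact hp ω; exact le_rfl]
  have hle : ∀ (x : α) (y : β),
      prob p (fun ω => X ω = x ∧ Y ω = y) ≤ prob p (fun ω => X ω = x) := by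
    intro x y
    apply Finset.sum_le_sum
    intro ω _
    by_cases h : X ω = x ∧ Y ω = y
    · simp [h, h.1]
    · simp only [h, if_false]
      split <;> [exact hp ω; exact le_rfl]
  unfold KL condEnt
  rw [Fintype.sum_prod_type, ← Finset.sum_neg_distrib]
  apply Finset.sum_congr rfl
  intro x _
  rw [Fintype.sum_prod_type, ← Finset.sum_neg_distrib]
  apply Finset.sum_congr rfl
  intro y _
  rw [Finset.sum_eq_single y]
  · simp only [if_pos rfl, if_true, mul_one]
    set a := prob p (fun ω => X ω = x ∧ Y ω = y) with ha
    set b := prob p (fun ω => X ω = x) with hb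
    by_cases h0 : a = 0
    · rw [h0]; simp
    · have hapos : 0 < a := lt_of_le_of_ne (hnn _) (Ne.symm h0)
      have hbpos : 0 < b := lt_of_lt_of_le hapos (hle x y)
      have : b * (a / b) * (a / b) = a * a / b := by
        field_simp
      rw [this]
      have : a / (a * a / b) = b / a := by
        field_simp
      rw [this, Real.log_div hbpos.ne' hapos.ne', Real.log_div hapos.ne' hbpos.ne']
      ring
  · intro y' _ hy'
    simp [Ne.symm hy']
  · intro h
    exact absurd (Finset.mem_univ y) h
end
end

section
/- If X₁ and X₂ are independent given Λ (mediation), and Λ' is a deterministic function of X₁ and also a deterministic function of X₂ (redundancy), then Λ' is a deterministic function of Λ (up to almost-sure equality). -/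
open scoped Classical BigOperators

noncomputable section

/-- `X₁` and `X₂` are conditionally independent given `Λ`:
`P[X₁=x₁, X₂=x₂, Λ=l]·P[Λ=l] = P[X₁=x₁, Λ=l]·P[X₂=x₂, Λ=l]` for all values. -/
def Mediates {Ω α β γ : Type*} [Fintype Ω]
    (p : Ω → ℝ) (X1 : Ω → α) (X2 : Ω → β) (L : Ω → γ) : Prop :=
  ∀ x1 x2 l,
    prob p (fun ω => X1 ω = x1 ∧ X2 ω = x2 ∧ L ω = l) * prob p (fun ω => L ω = l)
      = prob p (fun ω => X1 ω = x1 ∧ L ω = l) * prob p (fun ω => X2 ω = x2 ∧ L ω = l)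

lemma prob_pos_of_mem {Ω : Type*} [Fintype Ω] (p : Ω → ℝ) (hp : ∀ ω, 0 ≤ p ω)
    (E : Ω → Prop) (ω : Ω) (hω : p ω ≠ 0) (hE : E ω) : 0 < prob p E := by
  have h1 : 0 < p ω := lt_of_le_of_ne (hp ω) (Ne.symm hω)
  have h2 : (if E ω then p ω else 0) ≤ prob p E := by
    apply Finset.single_le_sum (f := fun ω => if E ω then p ω else 0)
    · intro i _
      split <;> simp [hp i]
    · exact Finset.mem_univ ω
  simp [hE] at h2
  linarith

lemma exists_of_prob_ne_zero {Ω : Type*} [Fintype Ω] (p : Ω → ℝ)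
    (E : Ω → Prop) (h : prob p E ≠ 0) : ∃ ω, p ω ≠ 0 ∧ E ω := by
  by_contra hc
  push_neg at hc
  apply h
  unfold prob
  apply Finset.sum_eq_zero
  intro ω _
  split
  · next hE =>
    by_contra hpω
    exact (hc ω hpω) hE
  · rfl

/-- Mediator determines redund (exact case, two observables): if `X₁ ⊥ X₂ | Λ`,
and `Λ' = f₁(X₁) = f₂(X₂)` almost surely, then `Λ'` is almost surely a
deterministic function of `Λ`. -/
theorem mediator_determines_redund_exact
    {Ω α β γ δ : Type*} [Fintype Ω] [Fintype α] [Fintype β]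
    (p : Ω → ℝ) (hp : ∀ ω, 0 ≤ p ω) (hsum : ∑ ω, p ω = 1)
    (X1 : Ω → α) (X2 : Ω → β) (L : Ω → γ) (L' : Ω → δ)
    (hmed : Mediates p X1 X2 L)
    (f1 : α → δ) (f2 : β → δ)
    (hf1 : ∀ ω, p ω ≠ 0 → L' ω = f1 (X1 ω))
    (hf2 : ∀ ω, p ω ≠ 0 → L' ω = f2 (X2 ω)) :
    ∃ g : γ → δ, ∀ ω, p ω ≠ 0 → L' ω = g (L ω) := by
  -- some point has positive mass
  have hex : ∃ ω₀ : Ω, p ω₀ ≠ 0 := by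
    by_contra h
    push_neg at h
    rw [Finset.sum_eq_zero (fun ω _ => h ω)] at hsum
    norm_num at hsum
  obtain ⟨ω₀, hω₀⟩ := hex
  -- key claim: same mediator value gives same L'
  have key : ∀ ω ω', p ω ≠ 0 → p ω' ≠ 0 → L ω = L ω' → L' ω = L' ω' := by
    intro ω ω' hω hω' hL
    set x1 := X1 ω
    set x2 := X2 ω'
    set l := L ω with hl
    have h1 : 0 < prob p (fun ω => X1 ω = x1 ∧ L ω = l) :=
      prob_pos_of_mem p hp _ ω hω ⟨rfl, rfl⟩
    have h2 : 0 < prob p (fun ω => X2 ω = x2 ∧ L ω = l) :=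
      prob_pos_of_mem p hp _ ω' hω' ⟨rfl, hL.symm⟩
    have hjoint : prob p (fun ω => X1 ω = x1 ∧ X2 ω = x2 ∧ L ω = l) ≠ 0 := by
      intro h0
      have := hmed x1 x2 l
      rw [h0, zero_mul] at this
      have := this.symm
      exact absurd this (ne_of_gt (mul_pos h1 h2))
    obtain ⟨ω'', hω'', hx1, hx2, hLl⟩ := exists_of_prob_ne_zero p _ hjoint
    calc L' ω = f1 x1 := hf1 ω hω
      _ = f1 (X1 ω'') := by rw [hx1]
      _ = L' ω'' := (hf1 ω'' hω'').symm
      _ = f2 (X2 ω'') := hf2 ω'' hω''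
      _ = f2 x2 := by rw [hx2]
      _ = L' ω' := (hf2 ω' hω').symm
  refine ⟨fun l => if h : ∃ ω, p ω ≠ 0 ∧ L ω = l then L' h.choose else L' ω₀, ?_⟩
  intro ω hω
  have h : ∃ ω', p ω' ≠ 0 ∧ L ω' = L ω := ⟨ω, hω, rfl⟩
  simp only [dif_pos h]
  exact key ω h.choose hω h.choose_spec.1 h.choose_spec.2.symm
end
end

section
/- (Approximate Mediator Determines Redund, two variables) If X₁ and X₂ are approximately independent given Λ, with D_KL(P[X₁,X₂,Λ] || P[Λ]P[X₁|Λ]P[X₂|Λ]) ≤ ε_med, and Λ' is approximately a redund over X₁, X₂, i.e. H(Λ'|X₁) ≤ ε₁ and H(Λ'|X₂) ≤ ε₂, then H(Λ'|Λ) ≤ ε_med + ε₁ + ε₂. -/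
open scoped Classical BigOperators

noncomputable section

/-- Mediation error: `D_KL(P[X₁,X₂,Λ] ‖ P[Λ]·P[X₁|Λ]·P[X₂|Λ])`. -/
def medKL {Ω α β γ : Type*} [Fintype Ω] [Fintype α] [Fintype β] [Fintype γ]
    (p : Ω → ℝ) (X1 : Ω → α) (X2 : Ω → β) (L : Ω → γ) : ℝ :=
  KL
    (fun t : α × β × γ => prob p (fun ω => X1 ω = t.1 ∧ X2 ω = t.2.1 ∧ L ω = t.2.2))
    (fun t : α × β × γ =>
      prob p (fun ω => L ω = t.2.2) *
        (prob p (fun ω => X1 ω = t.1 ∧ L ω = t.2.2) / prob p (fun ω => L ω = t.2.2)) *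
        (prob p (fun ω => X2 ω = t.2.1 ∧ L ω = t.2.2) / prob p (fun ω => L ω = t.2.2)))

lemma prob_nonneg {Ω : Type*} [Fintype Ω] {p : Ω → ℝ} (hp : ∀ ω, 0 ≤ p ω) (E : Ω → Prop) :
    0 ≤ prob p E :=
  Finset.sum_nonneg fun ω _ => by split <;> simp [hp ω]

lemma prob_congr {Ω : Type*} [Fintype Ω] (p : Ω → ℝ) {E F : Ω → Prop}
    (h : ∀ ω, E ω ↔ F ω) : prob p E = prob p F :=
  Finset.sum_congr rfl fun ω _ => by rw [if_congr (h ω) rfl rfl]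

lemma prob_split {Ω κ : Type*} [Fintype Ω] [Fintype κ] (p : Ω → ℝ) (E : Ω → Prop) (f : Ω → κ) :
    prob p E = ∑ k, prob p (fun ω => E ω ∧ f ω = k) := by
  unfold prob
  rw [Finset.sum_comm]
  refine Finset.sum_congr rfl fun ω _ => ?_
  by_cases h : E ω <;> simp [h, Finset.sum_ite_eq']




section PREV
variable {B C D : Type*} [Fintype B] [Fintype C] [Fintype D]

lemma one_sub_inv_le_log {x : ℝ} (hx : 0 < x) : 1 - x⁻¹ ≤ Real.log x := by
  have h := Real.log_le_sub_one_of_pos (inv_pos.mpr hx)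
  rw [Real.log_inv] at h; linarith

lemma sum_pos1 {f : B → ℝ} (hf : ∀ b, 0 ≤ f b) {b : B} (h : 0 < f b) : 0 < ∑ x, f x :=
  Finset.sum_pos' (fun x _ => hf x) ⟨b, Finset.mem_univ b, h⟩

lemma sum_pos2 {f : B → C → ℝ} (hf : ∀ b c, 0 ≤ f b c) {b : B} {c : C} (h : 0 < f b c) :
    0 < ∑ x, ∑ y, f x y :=
  sum_pos1 (fun x => Finset.sum_nonneg fun y _ => hf x y) (sum_pos1 (hf b) h)

lemma sum_pos3 {f : B → C → D → ℝ} (hf : ∀ b c d, 0 ≤ f b c d) {b : B} {c : C} {d : D}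
    (h : 0 < f b c d) : 0 < ∑ x, ∑ y, ∑ z, f x y z :=
  sum_pos1 (fun x => Finset.sum_nonneg fun y _ => Finset.sum_nonneg fun z _ => hf x y z)
    (sum_pos2 (hf b) h)

lemma sum_comm3 {A : Type*} [Fintype A] (f : A → B → C → ℝ) :
    ∑ a, ∑ b, ∑ c, f a b c = ∑ b, ∑ c, ∑ a, f a b c := by
  rw [Finset.sum_comm]
  exact Finset.sum_congr rfl fun b _ => Finset.sum_comm

lemma sum_comm4_rot {A : Type*} [Fintype A] (f : A → B → C → D → ℝ) :
    ∑ a, ∑ b, ∑ c, ∑ d, f a b c d = ∑ b, ∑ c, ∑ d, ∑ a, f a b c d := by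
  rw [Finset.sum_comm]
  refine Finset.sum_congr rfl fun b _ => ?_
  rw [Finset.sum_comm]
  exact Finset.sum_congr rfl fun c _ => Finset.sum_comm

lemma cmi_nonneg {A : Type*} [Fintype A]
    (m : A → B → C → ℝ) (hm : ∀ a b c, 0 ≤ m a b c)
    (mA : A → C → ℝ) (mB : B → C → ℝ) (mC : C → ℝ)
    (hA : ∀ a c, mA a c = ∑ b, m a b c)
    (hB : ∀ b c, mB b c = ∑ a, m a b c)
    (hC : ∀ c, mC c = ∑ a, ∑ b, m a b c) :
    0 ≤ ∑ a, ∑ b, ∑ c, m a b c * Real.log (m a b c * mC c / (mA a c * mB b c)) := by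
  have hmA : ∀ a c, 0 ≤ mA a c := fun a c => (hA a c) ▸ Finset.sum_nonneg fun b _ => hm a b c
  have hmB : ∀ b c, 0 ≤ mB b c := fun b c => (hB b c) ▸ Finset.sum_nonneg fun a _ => hm a b c
  have hmC : ∀ c, 0 ≤ mC c := fun c =>
    (hC c) ▸ Finset.sum_nonneg fun a _ => Finset.sum_nonneg fun b _ => hm a b c
  have key : ∀ a b c, m a b c - mA a c * mB b c / mC c ≤
      m a b c * Real.log (m a b c * mC c / (mA a c * mB b c)) := by
    intro a b c
    rcases eq_or_lt_of_le (hm a b c) with h | h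
    · rw [← h]
      simp only [zero_sub, zero_mul, neg_nonpos]
      exact div_nonneg (mul_nonneg (hmA a c) (hmB b c)) (hmC c)
    · have hApos : 0 < mA a c := by rw [hA]; exact sum_pos1 (fun b' => hm a b' c) h
      have hBpos : 0 < mB b c := by rw [hB]; exact sum_pos1 (fun a' => hm a' b c) h
      have hCpos : 0 < mC c := by rw [hC]; exact sum_pos2 (fun a' b' => hm a' b' c) h
      have harg : 0 < m a b c * mC c / (mA a c * mB b c) := by positivity
      have hlog := one_sub_inv_le_log harg
      have hmul := mul_le_mul_of_nonneg_left hlog h.le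
      have heq : m a b c * (1 - (m a b c * mC c / (mA a c * mB b c))⁻¹)
          = m a b c - mA a c * mB b c / mC c := by
        field_simp
      linarith [heq ▸ hmul]
  have hsumkey : ∑ a, ∑ b, ∑ c, (m a b c - mA a c * mB b c / mC c) ≤
      ∑ a, ∑ b, ∑ c, m a b c * Real.log (m a b c * mC c / (mA a c * mB b c)) :=
    Finset.sum_le_sum fun a _ => Finset.sum_le_sum fun b _ =>
      Finset.sum_le_sum fun c _ => key a b c
  have hbound : ∑ a, ∑ b, ∑ c, (m a b c - mA a c * mB b c / mC c) ≥ 0 := by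
    have hsub : ∑ a, ∑ b, ∑ c, (m a b c - mA a c * mB b c / mC c)
        = (∑ a, ∑ b, ∑ c, m a b c) - ∑ a, ∑ b, ∑ c, mA a c * mB b c / mC c := by
      simp [Finset.sum_sub_distrib]
    rw [hsub, ge_iff_le, sub_nonneg]
    have e1 : ∑ a, ∑ b, ∑ c, mA a c * mB b c / mC c
        = ∑ c, ∑ a, ∑ b, mA a c * mB b c / mC c :=
      Eq.trans (Finset.sum_congr rfl fun a _ => Finset.sum_comm) Finset.sum_comm
    have e2 : ∑ a, ∑ b, ∑ c, m a b c = ∑ c, ∑ a, ∑ b, m a b c :=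
      Eq.trans (Finset.sum_congr rfl fun a _ => Finset.sum_comm) Finset.sum_comm
    rw [e1, e2]
    refine Finset.sum_le_sum fun c _ => ?_
    have hinner : ∑ a, ∑ b, mA a c * mB b c / mC c = mC c * mC c / mC c := by
      have h' : ∑ a, ∑ b, mA a c * mB b c / mC c = (∑ a, mA a c) * (∑ b, mB b c) / mC c := by
        rw [Finset.sum_mul_sum, Finset.sum_div]
        exact Finset.sum_congr rfl fun a _ => by rw [Finset.sum_div]
      rw [h']
      congr 1
      congr 1
      · rw [hC c]; exact Finset.sum_congr rfl fun a _ => hA a c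
      · rw [hC c, Finset.sum_comm]; exact Finset.sum_congr rfl fun b _ => hB b c
    rw [hinner, ← hC c]
    rcases eq_or_lt_of_le (hmC c) with h | h
    · rw [← h]; simp
    · rw [mul_div_assoc, div_self h.ne', mul_one]
  linarith

lemma log_identity {q P1 P2 P3 P13 P23 P14 P24 P34 P123 P134 P234 : ℝ}
    (hq : 0 < q) (h1 : 0 < P1) (h2 : 0 < P2) (h3 : 0 < P3)
    (h13 : 0 < P13) (h23 : 0 < P23) (h14 : 0 < P14) (h24 : 0 < P24)
    (h34 : 0 < P34) (h123 : 0 < P123) (h134 : 0 < P134) (h234 : 0 < P234) :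
    q * Real.log (P123 / (P3 * (P13 / P3) * (P23 / P3)))
      - q * Real.log (P14 / P1) - q * Real.log (P24 / P2)
      + q * Real.log (P34 / P3)
    = q * Real.log (P134 * P1 / (P13 * P14))
      + q * Real.log (P234 * P2 / (P23 * P24))
      + q * Real.log (P123 / q)
      + q * Real.log (q * P34 / (P134 * P234)) := by
  have e : P3 * (P13 / P3) * (P23 / P3) = P13 * P23 / P3 := by field_simp
  rw [e]
  rw [Real.log_div h123.ne' (by positivity), Real.log_div (by positivity) h3.ne',
      Real.log_mul h13.ne' h23.ne',
      Real.log_div h14.ne' h1.ne', Real.log_div h24.ne' h2.ne', Real.log_div h34.ne' h3.ne',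
      Real.log_div (by positivity) (by positivity), Real.log_mul h134.ne' h1.ne',
      Real.log_mul h13.ne' h14.ne',
      Real.log_div (by positivity) (by positivity), Real.log_mul h234.ne' h2.ne',
      Real.log_mul h23.ne' h24.ne',
      Real.log_div h123.ne' hq.ne',
      Real.log_div (by positivity) (by positivity), Real.log_mul hq.ne' h34.ne',
      Real.log_mul h134.ne' h234.ne']
  ring

end PREV

lemma core {α β γ δ : Type*} [Fintype α] [Fintype β] [Fintype γ] [Fintype δ]
    (q : α → β → γ → δ → ℝ) (hq : ∀ a b c d, 0 ≤ q a b c d)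
    (P1 : α → ℝ) (P2 : β → ℝ) (P3 : γ → ℝ)
    (P13 : α → γ → ℝ) (P23 : β → γ → ℝ)
    (P14 : α → δ → ℝ) (P24 : β → δ → ℝ) (P34 : γ → δ → ℝ)
    (P123 : α → β → γ → ℝ) (P134 : α → γ → δ → ℝ) (P234 : β → γ → δ → ℝ)
    (h1 : ∀ a, P1 a = ∑ b, ∑ c, ∑ d, q a b c d)
    (h2 : ∀ b, P2 b = ∑ a, ∑ c, ∑ d, q a b c d)
    (h3 : ∀ c, P3 c = ∑ a, ∑ b, ∑ d, q a b c d)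
    (h13 : ∀ a c, P13 a c = ∑ b, ∑ d, q a b c d)
    (h23 : ∀ b c, P23 b c = ∑ a, ∑ d, q a b c d)
    (h14 : ∀ a d, P14 a d = ∑ b, ∑ c, q a b c d)
    (h24 : ∀ b d, P24 b d = ∑ a, ∑ c, q a b c d)
    (h34 : ∀ c d, P34 c d = ∑ a, ∑ b, q a b c d)
    (h123 : ∀ a b c, P123 a b c = ∑ d, q a b c d)
    (h134 : ∀ a c d, P134 a c d = ∑ b, q a b c d)
    (h234 : ∀ b c d, P234 b c d = ∑ a, q a b c d) :
    (-∑ c, ∑ d, P34 c d * Real.log (P34 c d / P3 c)) ≤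
      (∑ a, ∑ b, ∑ c, P123 a b c *
          Real.log (P123 a b c / (P3 c * (P13 a c / P3 c) * (P23 b c / P3 c))))
        + (-∑ a, ∑ d, P14 a d * Real.log (P14 a d / P1 a))
        + (-∑ b, ∑ d, P24 b d * Real.log (P24 b d / P2 b)) := by
  -- positivity of marginals on the support of q
  have pos1 : ∀ {a b c d}, 0 < q a b c d → 0 < P1 a := fun {a b c d} h => by
    rw [h1]; exact sum_pos3 (fun x y z => hq a x y z) h
  have pos2 : ∀ {a b c d}, 0 < q a b c d → 0 < P2 b := fun {a b c d} h => by
    rw [h2]; exact sum_pos3 (fun x y z => hq x b y z) h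
  have pos3 : ∀ {a b c d}, 0 < q a b c d → 0 < P3 c := fun {a b c d} h => by
    rw [h3]; exact sum_pos3 (fun x y z => hq x y c z) h
  have pos13 : ∀ {a b c d}, 0 < q a b c d → 0 < P13 a c := fun {a b c d} h => by
    rw [h13]; exact sum_pos2 (fun x z => hq a x c z) h
  have pos23 : ∀ {a b c d}, 0 < q a b c d → 0 < P23 b c := fun {a b c d} h => by
    rw [h23]; exact sum_pos2 (fun x z => hq x b c z) h
  have pos14 : ∀ {a b c d}, 0 < q a b c d → 0 < P14 a d := fun {a b c d} h => by
    rw [h14]; exact sum_pos2 (fun x y => hq a x y d) h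
  have pos24 : ∀ {a b c d}, 0 < q a b c d → 0 < P24 b d := fun {a b c d} h => by
    rw [h24]; exact sum_pos2 (fun x y => hq x b y d) h
  have pos34 : ∀ {a b c d}, 0 < q a b c d → 0 < P34 c d := fun {a b c d} h => by
    rw [h34]; exact sum_pos2 (fun x y => hq x y c d) h
  have pos123 : ∀ {a b c d}, 0 < q a b c d → 0 < P123 a b c := fun {a b c d} h => by
    rw [h123]; exact sum_pos1 (fun z => hq a b c z) h
  have pos134 : ∀ {a b c d}, 0 < q a b c d → 0 < P134 a c d := fun {a b c d} h => by
    rw [h134]; exact sum_pos1 (fun y => hq a y c d) h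
  have pos234 : ∀ {a b c d}, 0 < q a b c d → 0 < P234 b c d := fun {a b c d} h => by
    rw [h234]; exact sum_pos1 (fun x => hq x b c d) h
  -- expansions to full sums in (a,b,c,d) order
  have hSmed : (∑ a, ∑ b, ∑ c, P123 a b c *
        Real.log (P123 a b c / (P3 c * (P13 a c / P3 c) * (P23 b c / P3 c))))
      = ∑ a, ∑ b, ∑ c, ∑ d, q a b c d *
        Real.log (P123 a b c / (P3 c * (P13 a c / P3 c) * (P23 b c / P3 c))) := by
    refine Finset.sum_congr rfl fun a _ => Finset.sum_congr rfl fun b _ =>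
      Finset.sum_congr rfl fun c _ => ?_
    rw [h123, Finset.sum_mul]
  have hS1 : (∑ a, ∑ d, P14 a d * Real.log (P14 a d / P1 a))
      = ∑ a, ∑ b, ∑ c, ∑ d, q a b c d * Real.log (P14 a d / P1 a) := by
    have step1 : (∑ a, ∑ d, P14 a d * Real.log (P14 a d / P1 a))
        = ∑ a, ∑ d, ∑ b, ∑ c, q a b c d * Real.log (P14 a d / P1 a) := by
      refine Finset.sum_congr rfl fun a _ => Finset.sum_congr rfl fun d _ => ?_
      rw [h14, Finset.sum_mul]
      exact Finset.sum_congr rfl fun b _ => by rw [Finset.sum_mul]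
    rw [step1]
    exact Finset.sum_congr rfl fun a _ =>
      sum_comm3 (fun d b c => q a b c d * Real.log (P14 a d / P1 a))
  have hS2 : (∑ b, ∑ d, P24 b d * Real.log (P24 b d / P2 b))
      = ∑ a, ∑ b, ∑ c, ∑ d, q a b c d * Real.log (P24 b d / P2 b) := by
    have step1 : (∑ b, ∑ d, P24 b d * Real.log (P24 b d / P2 b))
        = ∑ b, ∑ d, ∑ a, ∑ c, q a b c d * Real.log (P24 b d / P2 b) := by
      refine Finset.sum_congr rfl fun b _ => Finset.sum_congr rfl fun d _ => ?_
      rw [h24, Finset.sum_mul]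
      exact Finset.sum_congr rfl fun a _ => by rw [Finset.sum_mul]
    rw [step1]
    have step2 : (∑ b, ∑ d, ∑ a, ∑ c, q a b c d * Real.log (P24 b d / P2 b))
        = ∑ b, ∑ a, ∑ c, ∑ d, q a b c d * Real.log (P24 b d / P2 b) :=
      Finset.sum_congr rfl fun b _ =>
        sum_comm3 (fun d a c => q a b c d * Real.log (P24 b d / P2 b))
    rw [step2]
    exact Finset.sum_comm
  have hSL : (∑ c, ∑ d, P34 c d * Real.log (P34 c d / P3 c))
      = ∑ a, ∑ b, ∑ c, ∑ d, q a b c d * Real.log (P34 c d / P3 c) := by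
    have step1 : (∑ c, ∑ d, P34 c d * Real.log (P34 c d / P3 c))
        = ∑ c, ∑ d, ∑ a, ∑ b, q a b c d * Real.log (P34 c d / P3 c) := by
      refine Finset.sum_congr rfl fun c _ => Finset.sum_congr rfl fun d _ => ?_
      rw [h34, Finset.sum_mul]
      exact Finset.sum_congr rfl fun a _ => by rw [Finset.sum_mul]
    rw [step1]
    exact Eq.trans
      (sum_comm4_rot (fun c d a b => q a b c d * Real.log (P34 c d / P3 c)))
      (sum_comm4_rot (fun d a b c => q a b c d * Real.log (P34 c d / P3 c)))
  -- the four nonnegative pieces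
  have hT1 : 0 ≤ ∑ a, ∑ b, ∑ c, ∑ d, q a b c d *
      Real.log (P134 a c d * P1 a / (P13 a c * P14 a d)) := by
    have regroup : (∑ a, ∑ b, ∑ c, ∑ d, q a b c d *
          Real.log (P134 a c d * P1 a / (P13 a c * P14 a d)))
        = ∑ c, ∑ d, ∑ a, P134 a c d *
          Real.log (P134 a c d * P1 a / (P13 a c * P14 a d)) := by
      have s1 : (∑ a, ∑ b, ∑ c, ∑ d, q a b c d *
            Real.log (P134 a c d * P1 a / (P13 a c * P14 a d)))
          = ∑ a, ∑ c, ∑ d, P134 a c d *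
            Real.log (P134 a c d * P1 a / (P13 a c * P14 a d)) := by
        refine Finset.sum_congr rfl fun a _ => ?_
        rw [sum_comm3 (fun b c d => q a b c d *
          Real.log (P134 a c d * P1 a / (P13 a c * P14 a d)))]
        refine Finset.sum_congr rfl fun c _ => Finset.sum_congr rfl fun d _ => ?_
        rw [h134]
        exact (Finset.sum_mul _ _ _).symm
      rw [s1]
      exact sum_comm3 (fun a c d => P134 a c d *
        Real.log (P134 a c d * P1 a / (P13 a c * P14 a d)))
    rw [regroup]
    have hmQ : ∀ (c : γ) (d : δ) (a : α), 0 ≤ P134 a c d := fun c d a => by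
      rw [h134]; exact Finset.sum_nonneg fun b _ => hq a b c d
    have hAQ : ∀ (c : γ) (a : α), P13 a c = ∑ d, P134 a c d := fun c a => by
      rw [h13 a c, Finset.sum_comm]
      exact Finset.sum_congr rfl fun d _ => (h134 a c d).symm
    have hBQ : ∀ (d : δ) (a : α), P14 a d = ∑ c, P134 a c d := fun d a => by
      rw [h14 a d, Finset.sum_comm]
      exact Finset.sum_congr rfl fun c _ => (h134 a c d).symm
    have hCQ : ∀ a, P1 a = ∑ c, ∑ d, P134 a c d := fun a => by
      rw [h1 a, sum_comm3 (fun b c d => q a b c d)]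
      exact Finset.sum_congr rfl fun c _ => Finset.sum_congr rfl fun d _ => (h134 a c d).symm
    exact cmi_nonneg (fun c d a => P134 a c d) hmQ
      (fun c a => P13 a c) (fun d a => P14 a d) P1 hAQ hBQ hCQ
  have hT2 : 0 ≤ ∑ a, ∑ b, ∑ c, ∑ d, q a b c d *
      Real.log (P234 b c d * P2 b / (P23 b c * P24 b d)) := by
    have regroup : (∑ a, ∑ b, ∑ c, ∑ d, q a b c d *
          Real.log (P234 b c d * P2 b / (P23 b c * P24 b d)))
        = ∑ c, ∑ d, ∑ b, P234 b c d *
          Real.log (P234 b c d * P2 b / (P23 b c * P24 b d)) := by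
      have s1 : (∑ a, ∑ b, ∑ c, ∑ d, q a b c d *
            Real.log (P234 b c d * P2 b / (P23 b c * P24 b d)))
          = ∑ b, ∑ c, ∑ d, P234 b c d *
            Real.log (P234 b c d * P2 b / (P23 b c * P24 b d)) := by
        rw [sum_comm4_rot (fun a b c d => q a b c d *
          Real.log (P234 b c d * P2 b / (P23 b c * P24 b d)))]
        refine Finset.sum_congr rfl fun b _ => Finset.sum_congr rfl fun c _ =>
          Finset.sum_congr rfl fun d _ => ?_
        rw [h234]
        exact (Finset.sum_mul _ _ _).symm
      rw [s1]
      exact sum_comm3 (fun b c d => P234 b c d *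
        Real.log (P234 b c d * P2 b / (P23 b c * P24 b d)))
    rw [regroup]
    have hmQ : ∀ (c : γ) (d : δ) (b : β), 0 ≤ P234 b c d := fun c d b => by
      rw [h234]; exact Finset.sum_nonneg fun a _ => hq a b c d
    have hAQ : ∀ (c : γ) (b : β), P23 b c = ∑ d, P234 b c d := fun c b => by
      rw [h23 b c, Finset.sum_comm]
      exact Finset.sum_congr rfl fun d _ => (h234 b c d).symm
    have hBQ : ∀ (d : δ) (b : β), P24 b d = ∑ c, P234 b c d := fun d b => by
      rw [h24 b d, Finset.sum_comm]
      exact Finset.sum_congr rfl fun c _ => (h234 b c d).symm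
    have hCQ : ∀ b, P2 b = ∑ c, ∑ d, P234 b c d := fun b => by
      rw [h2 b, sum_comm3 (fun a c d => q a b c d)]
      exact Finset.sum_congr rfl fun c _ => Finset.sum_congr rfl fun d _ => (h234 b c d).symm
    exact cmi_nonneg (fun c d b => P234 b c d) hmQ
      (fun c b => P23 b c) (fun d b => P24 b d) P2 hAQ hBQ hCQ
  have hT3 : 0 ≤ ∑ a, ∑ b, ∑ c, ∑ d, q a b c d * Real.log (P123 a b c / q a b c d) := by
    refine Finset.sum_nonneg fun a _ => Finset.sum_nonneg fun b _ =>
      Finset.sum_nonneg fun c _ => Finset.sum_nonneg fun d _ => ?_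
    rcases eq_or_lt_of_le (hq a b c d) with h | h
    · rw [← h, zero_mul]
    · refine mul_nonneg h.le (Real.log_nonneg ((one_le_div h).2 ?_))
      rw [h123]
      exact Finset.single_le_sum (fun d' _ => hq a b c d') (Finset.mem_univ d)
  have hT4 : 0 ≤ ∑ a, ∑ b, ∑ c, ∑ d, q a b c d *
      Real.log (q a b c d * P34 c d / (P134 a c d * P234 b c d)) := by
    have inst := cmi_nonneg (fun a b (p : γ × δ) => q a b p.1 p.2)
      (fun a b p => hq a b p.1 p.2)
      (fun a (p : γ × δ) => P134 a p.1 p.2) (fun b (p : γ × δ) => P234 b p.1 p.2)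
      (fun p : γ × δ => P34 p.1 p.2)
      (fun a p => h134 a p.1 p.2) (fun b p => h234 b p.1 p.2)
      (fun p => h34 p.1 p.2)
    refine le_trans inst (le_of_eq ?_)
    refine Finset.sum_congr rfl fun a _ => Finset.sum_congr rfl fun b _ => ?_
    rw [Fintype.sum_prod_type]
  -- the exact decomposition
  have key : (∑ a, ∑ b, ∑ c, ∑ d, q a b c d *
        Real.log (P123 a b c / (P3 c * (P13 a c / P3 c) * (P23 b c / P3 c))))
      - (∑ a, ∑ b, ∑ c, ∑ d, q a b c d * Real.log (P14 a d / P1 a))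
      - (∑ a, ∑ b, ∑ c, ∑ d, q a b c d * Real.log (P24 b d / P2 b))
      + (∑ a, ∑ b, ∑ c, ∑ d, q a b c d * Real.log (P34 c d / P3 c))
      = (∑ a, ∑ b, ∑ c, ∑ d, q a b c d *
          Real.log (P134 a c d * P1 a / (P13 a c * P14 a d)))
        + (∑ a, ∑ b, ∑ c, ∑ d, q a b c d *
          Real.log (P234 b c d * P2 b / (P23 b c * P24 b d)))
        + (∑ a, ∑ b, ∑ c, ∑ d, q a b c d * Real.log (P123 a b c / q a b c d))
        + (∑ a, ∑ b, ∑ c, ∑ d, q a b c d *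
          Real.log (q a b c d * P34 c d / (P134 a c d * P234 b c d))) := by
    simp only [← Finset.sum_sub_distrib, ← Finset.sum_add_distrib]
    refine Finset.sum_congr rfl fun a _ => Finset.sum_congr rfl fun b _ =>
      Finset.sum_congr rfl fun c _ => Finset.sum_congr rfl fun d _ => ?_
    rcases eq_or_lt_of_le (hq a b c d) with h | h
    · rw [← h]; ring
    · exact log_identity h (pos1 h) (pos2 h) (pos3 h) (pos13 h) (pos23 h) (pos14 h)
        (pos24 h) (pos34 h) (pos123 h) (pos134 h) (pos234 h)
  rw [hSmed, hS1, hS2, hSL] at *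
  linarith [key, hT1, hT2, hT3, hT4]

/-- Approximate Mediator Determines Redund (two observables): if `X₁,X₂` are
approximately independent given `Λ` (KL error ≤ ε_med) and `Λ'` is approximately
a redund (`H(Λ'|X₁) ≤ ε₁`, `H(Λ'|X₂) ≤ ε₂`), then `H(Λ'|Λ) ≤ ε_med + ε₁ + ε₂`. -/
theorem mediator_determines_redund_approx
    {Ω α β γ δ : Type*} [Fintype Ω] [Fintype α] [Fintype β] [Fintype γ] [Fintype δ]
    (p : Ω → ℝ) (hp : ∀ ω, 0 ≤ p ω) (hsum : ∑ ω, p ω = 1)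
    (X1 : Ω → α) (X2 : Ω → β) (L : Ω → γ) (L' : Ω → δ)
    (εmed ε₁ ε₂ : ℝ)
    (hmed : medKL p X1 X2 L ≤ εmed)
    (hred1 : condEnt p X1 L' ≤ ε₁)
    (hred2 : condEnt p X2 L' ≤ ε₂) :
    condEnt p L L' ≤ εmed + ε₁ + ε₂ := by
  have hq : ∀ (a : α) (b : β) (c : γ) (d : δ),
      0 ≤ prob p (fun ω => X1 ω = a ∧ X2 ω = b ∧ L ω = c ∧ L' ω = d) :=
    fun a b c d => prob_nonneg hp _
  have h1 : ∀ a, prob p (fun ω => X1 ω = a)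
      = ∑ b, ∑ c, ∑ d, prob p (fun ω => X1 ω = a ∧ X2 ω = b ∧ L ω = c ∧ L' ω = d) := by
    intro a
    rw [prob_split p _ X2]
    refine Finset.sum_congr rfl fun b _ => ?_
    rw [prob_split p _ L]
    refine Finset.sum_congr rfl fun c _ => ?_
    rw [prob_split p _ L']
    exact Finset.sum_congr rfl fun d _ => prob_congr p fun ω => by tauto
  have h2 : ∀ b, prob p (fun ω => X2 ω = b)
      = ∑ a, ∑ c, ∑ d, prob p (fun ω => X1 ω = a ∧ X2 ω = b ∧ L ω = c ∧ L' ω = d) := by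
    intro b
    rw [prob_split p _ X1]
    refine Finset.sum_congr rfl fun a _ => ?_
    rw [prob_split p _ L]
    refine Finset.sum_congr rfl fun c _ => ?_
    rw [prob_split p _ L']
    exact Finset.sum_congr rfl fun d _ => prob_congr p fun ω => by tauto
  have h3 : ∀ c, prob p (fun ω => L ω = c)
      = ∑ a, ∑ b, ∑ d, prob p (fun ω => X1 ω = a ∧ X2 ω = b ∧ L ω = c ∧ L' ω = d) := by
    intro c
    rw [prob_split p _ X1]
    refine Finset.sum_congr rfl fun a _ => ?_
    rw [prob_split p _ X2]
    refine Finset.sum_congr rfl fun b _ => ?_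
    rw [prob_split p _ L']
    exact Finset.sum_congr rfl fun d _ => prob_congr p fun ω => by tauto
  have h13 : ∀ a c, prob p (fun ω => X1 ω = a ∧ L ω = c)
      = ∑ b, ∑ d, prob p (fun ω => X1 ω = a ∧ X2 ω = b ∧ L ω = c ∧ L' ω = d) := by
    intro a c
    rw [prob_split p _ X2]
    refine Finset.sum_congr rfl fun b _ => ?_
    rw [prob_split p _ L']
    exact Finset.sum_congr rfl fun d _ => prob_congr p fun ω => by tauto
  have h23 : ∀ b c, prob p (fun ω => X2 ω = b ∧ L ω = c)
      = ∑ a, ∑ d, prob p (fun ω => X1 ω = a ∧ X2 ω = b ∧ L ω = c ∧ L' ω = d) := by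
    intro b c
    rw [prob_split p _ X1]
    refine Finset.sum_congr rfl fun a _ => ?_
    rw [prob_split p _ L']
    exact Finset.sum_congr rfl fun d _ => prob_congr p fun ω => by tauto
  have h14 : ∀ a d, prob p (fun ω => X1 ω = a ∧ L' ω = d)
      = ∑ b, ∑ c, prob p (fun ω => X1 ω = a ∧ X2 ω = b ∧ L ω = c ∧ L' ω = d) := by
    intro a d
    rw [prob_split p _ X2]
    refine Finset.sum_congr rfl fun b _ => ?_
    rw [prob_split p _ L]
    exact Finset.sum_congr rfl fun c _ => prob_congr p fun ω => by tauto
  have h24 : ∀ b d, prob p (fun ω => X2 ω = b ∧ L' ω = d)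
      = ∑ a, ∑ c, prob p (fun ω => X1 ω = a ∧ X2 ω = b ∧ L ω = c ∧ L' ω = d) := by
    intro b d
    rw [prob_split p _ X1]
    refine Finset.sum_congr rfl fun a _ => ?_
    rw [prob_split p _ L]
    exact Finset.sum_congr rfl fun c _ => prob_congr p fun ω => by tauto
  have h34 : ∀ c d, prob p (fun ω => L ω = c ∧ L' ω = d)
      = ∑ a, ∑ b, prob p (fun ω => X1 ω = a ∧ X2 ω = b ∧ L ω = c ∧ L' ω = d) := by
    intro c d
    rw [prob_split p _ X1]
    refine Finset.sum_congr rfl fun a _ => ?_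
    rw [prob_split p _ X2]
    exact Finset.sum_congr rfl fun b _ => prob_congr p fun ω => by tauto
  have h123 : ∀ a b c, prob p (fun ω => X1 ω = a ∧ X2 ω = b ∧ L ω = c)
      = ∑ d, prob p (fun ω => X1 ω = a ∧ X2 ω = b ∧ L ω = c ∧ L' ω = d) := by
    intro a b c
    rw [prob_split p _ L']
    exact Finset.sum_congr rfl fun d _ => prob_congr p fun ω => by tauto
  have h134 : ∀ a c d, prob p (fun ω => X1 ω = a ∧ L ω = c ∧ L' ω = d)
      = ∑ b, prob p (fun ω => X1 ω = a ∧ X2 ω = b ∧ L ω = c ∧ L' ω = d) := by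
    intro a c d
    rw [prob_split p _ X2]
    exact Finset.sum_congr rfl fun b _ => prob_congr p fun ω => by tauto
  have h234 : ∀ b c d, prob p (fun ω => X2 ω = b ∧ L ω = c ∧ L' ω = d)
      = ∑ a, prob p (fun ω => X1 ω = a ∧ X2 ω = b ∧ L ω = c ∧ L' ω = d) := by
    intro b c d
    rw [prob_split p _ X1]
    exact Finset.sum_congr rfl fun a _ => prob_congr p fun ω => by tauto
  have hcore := core
    (fun a b c d => prob p (fun ω => X1 ω = a ∧ X2 ω = b ∧ L ω = c ∧ L' ω = d)) hq
    (fun a => prob p (fun ω => X1 ω = a))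
    (fun b => prob p (fun ω => X2 ω = b))
    (fun c => prob p (fun ω => L ω = c))
    (fun a c => prob p (fun ω => X1 ω = a ∧ L ω = c))
    (fun b c => prob p (fun ω => X2 ω = b ∧ L ω = c))
    (fun a d => prob p (fun ω => X1 ω = a ∧ L' ω = d))
    (fun b d => prob p (fun ω => X2 ω = b ∧ L' ω = d))
    (fun c d => prob p (fun ω => L ω = c ∧ L' ω = d))
    (fun a b c => prob p (fun ω => X1 ω = a ∧ X2 ω = b ∧ L ω = c))
    (fun a c d => prob p (fun ω => X1 ω = a ∧ L ω = c ∧ L' ω = d))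
    (fun b c d => prob p (fun ω => X2 ω = b ∧ L ω = c ∧ L' ω = d))
    h1 h2 h3 h13 h23 h14 h24 h34 h123 h134 h234
  have emed : medKL p X1 X2 L
      = ∑ a, ∑ b, ∑ c, prob p (fun ω => X1 ω = a ∧ X2 ω = b ∧ L ω = c) *
          Real.log (prob p (fun ω => X1 ω = a ∧ X2 ω = b ∧ L ω = c) /
            (prob p (fun ω => L ω = c) *
              (prob p (fun ω => X1 ω = a ∧ L ω = c) / prob p (fun ω => L ω = c)) *
              (prob p (fun ω => X2 ω = b ∧ L ω = c) / prob p (fun ω => L ω = c)))) := by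
    simp [medKL, KL, Fintype.sum_prod_type]
  have eL : condEnt p L L'
      = -∑ c, ∑ d, prob p (fun ω => L ω = c ∧ L' ω = d) *
          Real.log (prob p (fun ω => L ω = c ∧ L' ω = d) / prob p (fun ω => L ω = c)) := rfl
  have e1 : condEnt p X1 L'
      = -∑ a, ∑ d, prob p (fun ω => X1 ω = a ∧ L' ω = d) *
          Real.log (prob p (fun ω => X1 ω = a ∧ L' ω = d) / prob p (fun ω => X1 ω = a)) := rfl
  have e2 : condEnt p X2 L'
      = -∑ b, ∑ d, prob p (fun ω => X2 ω = b ∧ L' ω = d) *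
          Real.log (prob p (fun ω => X2 ω = b ∧ L' ω = d) / prob p (fun ω => X2 ω = b)) := rfl
  rw [eL, e1, e2] at *
  rw [emed] at hmed
  calc _ ≤ _ := hcore
    _ ≤ εmed + ε₁ + ε₂ := add_le_add (add_le_add hmed hred1) hred2
end
end

section
/- (Exact Frankenstein rule, three variables) Suppose a distribution P over (X₁, X₂, X₃) factorizes according to two DAGs G₁ and G₂, both compatible with the topological ordering X₁, X₂, X₃. Then P factorizes according to any 'Frankenstein' DAG in which each variable Xᵢ takes its parent set from either G₁ or G₂. -/
open scoped Classical BigOperators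

noncomputable section

/-- Marginal probability that coordinates in `S` take the values `x` takes. -/
def margin {n : ℕ} {α : Fin n → Type*} [∀ i, Fintype (α i)]
    (P : (∀ i, α i) → ℝ) (S : Finset (Fin n)) (x : ∀ i, α i) : ℝ :=
  ∑ y, if ∀ i ∈ S, y i = x i then P y else 0

/-- Conditional probability of coordinate `i` given the coordinates in `pa`. -/
def condP {n : ℕ} {α : Fin n → Type*} [∀ i, Fintype (α i)]
    (P : (∀ i, α i) → ℝ) (i : Fin n) (pa : Finset (Fin n)) (x : ∀ i, α i) : ℝ :=
  margin P (insert i pa) x / margin P pa x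

/-- `P` factorizes according to the DAG with parent function `pa`. -/
def Factorizes {n : ℕ} {α : Fin n → Type*} [∀ i, Fintype (α i)]
    (P : (∀ i, α i) → ℝ) (pa : Fin n → Finset (Fin n)) : Prop :=
  ∀ x, P x = ∏ i, condP P i (pa i) x

namespace Frank

variable {n : ℕ} {α : Fin n → Type*} [∀ i, Fintype (α i)]

lemma margin_nonneg (P : (∀ i, α i) → ℝ) (hP0 : ∀ x, 0 ≤ P x)
    (S : Finset (Fin n)) (x : ∀ i, α i) : 0 ≤ margin P S x := by
  apply Finset.sum_nonneg
  intro y _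
  split <;> [exact hP0 y; exact le_rfl]

lemma margin_mono (P : (∀ i, α i) → ℝ) (hP0 : ∀ x, 0 ≤ P x)
    {S T : Finset (Fin n)} (hST : S ⊆ T) (x : ∀ i, α i) :
    margin P T x ≤ margin P S x := by
  apply Finset.sum_le_sum
  intro y _
  by_cases h : ∀ i ∈ T, y i = x i
  · rw [if_pos h, if_pos fun i hi => h i (hST hi)]
  · rw [if_neg h]
    split <;> [exact hP0 y; exact le_rfl]

lemma margin_empty (P : (∀ i, α i) → ℝ) (x : ∀ i, α i) :
    margin P ∅ x = ∑ y, P y := by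
  simp [margin]

lemma margin_univ (P : (∀ i, α i) → ℝ) (x : ∀ i, α i) :
    margin P Finset.univ x = P x := by
  rw [margin, Finset.sum_eq_single x]
  · simp
  · intro y _ hy
    rw [if_neg]
    intro h
    exact hy (funext fun i => h i (Finset.mem_univ i))
  · intro h
    exact absurd (Finset.mem_univ x) h

lemma margin_update (P : (∀ i, α i) → ℝ) {S : Finset (Fin n)} {i : Fin n}
    (hi : i ∉ S) (x : ∀ i, α i) (v : α i) :
    margin P S (Function.update x i v) = margin P S x := by
  unfold margin
  apply Finset.sum_congr rfl
  intro y _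
  congr 1
  apply propext
  constructor <;> intro h j hj <;>
    have hji : j ≠ i := fun e => hi (e ▸ hj)
  · simpa [Function.update_of_ne hji] using h j hj
  · simp [Function.update_of_ne hji, h j hj]

lemma sum_margin_update (P : (∀ i, α i) → ℝ) {S : Finset (Fin n)} {i : Fin n}
    (hi : i ∉ S) (x : ∀ i, α i) :
    ∑ v, margin P (insert i S) (Function.update x i v) = margin P S x := by
  unfold margin
  rw [Finset.sum_comm]
  apply Finset.sum_congr rfl
  intro y _
  have key : ∀ v : α i, (∀ j ∈ insert i S, y j = Function.update x i v j) ↔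
      (v = y i ∧ ∀ j ∈ S, y j = x j) := by
    intro v
    constructor
    · intro h
      have h0 := h i (Finset.mem_insert_self i S)
      rw [Function.update_self] at h0
      refine ⟨h0.symm, ?_⟩
      intro j hj
      have hji : j ≠ i := fun e => hi (e ▸ hj)
      simpa [Function.update_of_ne hji] using h j (Finset.mem_insert_of_mem hj)
    · rintro ⟨hv, h⟩ j hj
      rcases Finset.mem_insert.mp hj with rfl | hj
      · simp [hv]
      · have hji : j ≠ i := fun e => hi (e ▸ hj)
        simp [Function.update_of_ne hji, h j hj]
  simp only [key]
  by_cases hC : ∀ j ∈ S, y j = x j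
  · rw [if_pos hC,
      Finset.sum_congr rfl fun v _ => if_congr (and_iff_left hC) rfl rfl,
      Finset.sum_ite_eq' Finset.univ (y i) fun _ => P y, if_pos (Finset.mem_univ _)]
  · rw [if_neg hC, Finset.sum_eq_zero]
    intro v _
    exact if_neg fun hh => hC hh.2

lemma condP_update (P : (∀ i, α i) → ℝ) {S : Finset (Fin n)} {i j : Fin n}
    (hji : j ≠ i) (hj : j ∉ S) (x : ∀ i, α i) (v : α j) :
    condP P i S (Function.update x j v) = condP P i S x := by
  unfold condP
  rw [margin_update P hj, margin_update P (by simp [hji, hj] : j ∉ insert i S)]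

lemma condP_empty (P : (∀ i, α i) → ℝ) (hP1 : ∑ x, P x = 1)
    (i : Fin n) (x : ∀ i, α i) :
    condP P i ∅ x = margin P {i} x := by
  unfold condP
  rw [margin_empty, hP1]
  simp

end Frank

open Frank

section Three

variable {α : Fin 3 → Type*} [∀ i, Fintype (α i)]

/-- Step A: the marginal over the first two coordinates, from a factorization. -/
lemma stepA (P : (∀ i, α i) → ℝ) (hP0 : ∀ x, 0 ≤ P x) (hP1 : ∑ x, P x = 1)
    (pa : Fin 3 → Finset (Fin 3)) (hc : ∀ i, ∀ j ∈ pa i, j < i)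
    (hf : Factorizes P pa) (x : ∀ i, α i) :
    margin P {0, 1} x = margin P {0} x * condP P 1 (pa 1) x *
      (if margin P (pa 2) x = 0 then 0 else 1) := by
  have hpa0 : pa 0 = ∅ := by
    rw [Finset.eq_empty_iff_forall_notMem]
    intro j hj
    exact absurd (hc 0 j hj) (by simp [Fin.not_lt_zero])
  have hpa1 : pa 1 ⊆ {0} := by
    intro j hj
    have h := hc 1 j hj
    fin_cases j <;> first | decide | exact absurd h (by decide)
  have hpa2 : pa 2 ⊆ {0, 1} := by
    intro j hj
    have h := hc 2 j hj
    fin_cases j <;> first | decide | exact absurd h (by decide)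
  have h2notpa1 : (2 : Fin 3) ∉ pa 1 := fun h => by
    have := hpa1 h; revert this; decide
  have h2notpa2 : (2 : Fin 3) ∉ pa 2 := fun h => by
    have := hpa2 h; revert this; decide
  have hins : insert (2 : Fin 3) ({0, 1} : Finset (Fin 3)) = Finset.univ := by decide
  have h2not01 : (2 : Fin 3) ∉ ({0, 1} : Finset (Fin 3)) := by decide
  have key : margin P {0, 1} x = ∑ v, P (Function.update x 2 v) := by
    rw [← sum_margin_update P h2not01 x, hins]
    exact Finset.sum_congr rfl fun v _ => margin_univ P _
  rw [key]
  have expand : ∀ v : α 2, P (Function.update x 2 v) =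
      condP P 0 (pa 0) x * condP P 1 (pa 1) x * condP P 2 (pa 2) (Function.update x 2 v) := by
    intro v
    rw [hf (Function.update x 2 v), Fin.prod_univ_three,
      condP_update P (by decide) (by rw [hpa0]; simp) x v,
      condP_update P (by decide) h2notpa1 x v]
  rw [Finset.sum_congr rfl fun v _ => expand v, ← Finset.mul_sum]
  have hsumc : ∑ v, condP P 2 (pa 2) (Function.update x 2 v) =
      (if margin P (pa 2) x = 0 then 0 else 1) := by
    unfold condP
    have : ∀ v : α 2, margin P (pa 2) (Function.update x 2 v) = margin P (pa 2) x :=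
      fun v => margin_update P h2notpa2 x v
    simp only [this]
    rw [← Finset.sum_div, sum_margin_update P h2notpa2 x]
    by_cases h : margin P (pa 2) x = 0
    · simp [h]
    · rw [if_neg h, div_self h]
  rw [hsumc]
  have hc0 : condP P 0 (pa 0) x = margin P {0} x := by
    rw [hpa0, condP_empty P hP1]
  rw [hc0]

/-- Exact local step for coordinate 1. -/
lemma star1 (P : (∀ i, α i) → ℝ) (hP0 : ∀ x, 0 ≤ P x) (hP1 : ∑ x, P x = 1)
    (pa : Fin 3 → Finset (Fin 3)) (hc : ∀ i, ∀ j ∈ pa i, j < i)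
    (hf : Factorizes P pa) (x : ∀ i, α i) :
    margin P ({0, 1} : Finset (Fin 3)) x = margin P {0} x * condP P 1 (pa 1) x := by
  have hpa1 : pa 1 ⊆ {0} := by
    intro j hj
    have h := hc 1 j hj
    fin_cases j <;> first | decide | exact absurd h (by decide)
  have hpa2 : pa 2 ⊆ {0, 1} := by
    intro j hj
    have h := hc 2 j hj
    fin_cases j <;> first | decide | exact absurd h (by decide)
  by_cases h : margin P (pa 2) x = 0
  case neg =>
    rw [stepA P hP0 hP1 pa hc hf x, if_neg h, mul_one]
  · -- degenerate case: conditioning event for coordinate 2 has probability 0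
    have h01 : margin P ({0, 1} : Finset (Fin 3)) x = 0 :=
      le_antisymm (h ▸ margin_mono P hP0 hpa2 x) (margin_nonneg P hP0 _ x)
    rw [h01]
    symm
    -- show RHS is zero
    have hpa1cases : pa 1 = ∅ ∨ pa 1 = {0} := by
      have : ∀ s : Finset (Fin 3), s ⊆ {0} → s = ∅ ∨ s = {0} := by decide
      exact this _ hpa1
    rcases hpa1cases with h1 | h1
    · -- pa 1 = ∅ : condP 1 = margin {1}
      rw [h1, condP_empty P hP1]
      have hpa2cases : pa 2 = ∅ ∨ pa 2 = {0} ∨ pa 2 = {1} ∨ pa 2 = {0, 1} := by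
        have : ∀ s : Finset (Fin 3), s ⊆ {0, 1} →
            s = ∅ ∨ s = {0} ∨ s = {1} ∨ s = {0, 1} := by decide
        exact this _ hpa2
      rcases hpa2cases with h2 | h2 | h2 | h2
      · exfalso
        rw [h2, margin_empty, hP1] at h
        exact one_ne_zero h
      · rw [h2] at h; rw [h, zero_mul]
      · rw [h2] at h; rw [h, mul_zero]
      · -- the hard case: pa 1 = ∅, pa 2 = {0,1}, margin {0,1} x = 0
        rw [h2] at h
        -- use Step A at all updates of coordinate 1
        have hA : ∀ y, margin P ({0, 1} : Finset (Fin 3)) y =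
            margin P {0} y * margin P {1} y *
              (if margin P ({0, 1} : Finset (Fin 3)) y = 0 then 0 else 1) := by
          intro y
          have := stepA P hP0 hP1 pa hc hf y
          rwa [h1, condP_empty P hP1, h2] at this
        have h1not0 : (1 : Fin 3) ∉ ({0} : Finset (Fin 3)) := by decide
        have hins10 : insert (1 : Fin 3) ({0} : Finset (Fin 3)) = {0, 1} := by decide
        have h1notE : (1 : Fin 3) ∉ (∅ : Finset (Fin 3)) := by decide
        have hins1E : insert (1 : Fin 3) (∅ : Finset (Fin 3)) = {1} := by decide
        set f : α 1 → ℝ := fun v => margin P ({0, 1} : Finset (Fin 3)) (Function.update x 1 v)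
        set g : α 1 → ℝ := fun v => margin P {0} x * margin P {1} (Function.update x 1 v)
        have hfg : ∀ v, f v ≤ g v := by
          intro v
          have := hA (Function.update x 1 v)
          rw [margin_update P h1not0 x v] at this
          rw [show f v = _ from this]
          have hnn : 0 ≤ margin P {0} x * margin P {1} (Function.update x 1 v) :=
            mul_nonneg (margin_nonneg P hP0 _ _) (margin_nonneg P hP0 _ _)
          calc margin P {0} x * margin P {1} (Function.update x 1 v) *
                (if margin P ({0, 1} : Finset (Fin 3)) (Function.update x 1 v) = 0 then 0 else 1)
              ≤ margin P {0} x * margin P {1} (Function.update x 1 v) * 1 := by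
                apply mul_le_mul_of_nonneg_left _ hnn
                split <;> norm_num
            _ = g v := by rw [mul_one]
        have hsumf : ∑ v, f v = margin P {0} x := by
          have := sum_margin_update P h1not0 x
          rwa [hins10] at this
        have hsumg : ∑ v, g v = margin P {0} x := by
          have := sum_margin_update P h1notE x
          rw [hins1E, margin_empty, hP1] at this
          simp only [g, ← Finset.mul_sum, this, mul_one]
        have heq : ∀ v ∈ Finset.univ, f v = g v := by
          rw [← Finset.sum_eq_sum_iff_of_le fun v _ => hfg v]
          rw [hsumf, hsumg]
        have := heq (x 1) (Finset.mem_univ _)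
        simp only [f, g, Function.update_eq_self] at this
        rw [← this, h]
    · -- pa 1 = {0}
      rw [h1]
      unfold condP
      have : insert (1 : Fin 3) ({0} : Finset (Fin 3)) = {0, 1} := by decide
      rw [this, h01, zero_div, mul_zero]

/-- Exact local step for coordinate 2. -/
lemma star2 (P : (∀ i, α i) → ℝ) (hP0 : ∀ x, 0 ≤ P x) (hP1 : ∑ x, P x = 1)
    (pa : Fin 3 → Finset (Fin 3)) (hc : ∀ i, ∀ j ∈ pa i, j < i)
    (hf : Factorizes P pa) (x : ∀ i, α i) :
    P x = margin P ({0, 1} : Finset (Fin 3)) x * condP P 2 (pa 2) x := by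
  have hpa0 : pa 0 = ∅ := by
    rw [Finset.eq_empty_iff_forall_notMem]
    intro j hj
    exact absurd (hc 0 j hj) (by simp [Fin.not_lt_zero])
  rw [hf x, Fin.prod_univ_three, hpa0, condP_empty P hP1,
    star1 P hP0 hP1 pa hc hf x]

end Three

end

noncomputable section

/-- Exact Frankenstein rule for three variables: if `P` factorizes according to
two DAGs `G₁, G₂` both compatible with the ordering `X₁, X₂, X₃`, then `P`
factorizes according to any "Frankenstein" DAG taking each variable's parent set
from either `G₁` or `G₂`. -/
theorem frankenstein_exact_three
    {α : Fin 3 → Type*} [∀ i, Fintype (α i)]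
    (P : (∀ i, α i) → ℝ) (hP0 : ∀ x, 0 ≤ P x) (hP1 : ∑ x, P x = 1)
    (pa₁ pa₂ : Fin 3 → Finset (Fin 3))
    (hc₁ : ∀ i, ∀ j ∈ pa₁ i, j < i) (hc₂ : ∀ i, ∀ j ∈ pa₂ i, j < i)
    (hf₁ : Factorizes P pa₁) (hf₂ : Factorizes P pa₂)
    (σ : Fin 3 → Bool) :
    Factorizes P (fun i => if σ i then pa₁ i else pa₂ i) := by
  intro x
  simp only [Fin.prod_univ_three]
  have hpa0 : (if σ 0 then pa₁ 0 else pa₂ 0) = ∅ := by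
    split
    · rw [Finset.eq_empty_iff_forall_notMem]
      intro j hj
      exact absurd (hc₁ 0 j hj) (by simp [Fin.not_lt_zero])
    · rw [Finset.eq_empty_iff_forall_notMem]
      intro j hj
      exact absurd (hc₂ 0 j hj) (by simp [Fin.not_lt_zero])
  rw [hpa0, Frank.condP_empty P hP1]
  cases hσ1 : σ 1 <;> cases hσ2 : σ 2
  · rw [star2 P hP0 hP1 pa₂ hc₂ hf₂ x, star1 P hP0 hP1 pa₂ hc₂ hf₂ x]
    simp [hσ1, hσ2]
  · rw [star2 P hP0 hP1 pa₁ hc₁ hf₁ x, star1 P hP0 hP1 pa₂ hc₂ hf₂ x]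
    simp [hσ1, hσ2]
  · rw [star2 P hP0 hP1 pa₂ hc₂ hf₂ x, star1 P hP0 hP1 pa₁ hc₁ hf₁ x]
    simp [hσ1, hσ2]
  · rw [star2 P hP0 hP1 pa₁ hc₁ hf₁ x, star1 P hP0 hP1 pa₁ hc₁ hf₁ x]
    simp [hσ1, hσ2]

end
end

section
/- (Factorization Transfer) Let P and Q be distributions over X₁,…,Xₙ with D_KL(P || Q) ≤ ε. If Q factorizes exactly according to a DAG G, then D_KL(P || Πᵢ P[Xᵢ | X_{pa_G(i)}]) ≤ ε. -/
open scoped Classical BigOperators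

noncomputable section

/-- `D_KL(P ‖ Πᵢ P[Xᵢ | X_{pa(i)}])`. -/
def klFact {n : ℕ} {α : Fin n → Type*} [∀ i, Fintype (α i)]
    (P : (∀ i, α i) → ℝ) (pa : Fin n → Finset (Fin n)) : ℝ :=
  ∑ x, P x * Real.log (P x / ∏ i, condP P i (pa i) x)

section FTAux
variable {n : ℕ} {α : Fin n → Type*} [∀ i, Fintype (α i)]

lemma margin_nonneg (P : (∀ i, α i) → ℝ) (hP : ∀ x, 0 ≤ P x)
    (S : Finset (Fin n)) (x : ∀ i, α i) : 0 ≤ margin P S x :=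
  Finset.sum_nonneg fun y _ => by split <;> [exact hP y; exact le_rfl]

lemma self_le_margin (P : (∀ i, α i) → ℝ) (hP : ∀ x, 0 ≤ P x)
    (S : Finset (Fin n)) (x : ∀ i, α i) : P x ≤ margin P S x := by
  have h := Finset.single_le_sum
    (f := fun y => if (∀ i ∈ S, y i = x i) then P y else 0)
    (fun y _ => by split <;> [exact hP y; exact le_rfl])
    (Finset.mem_univ x)
  simpa [margin] using h

lemma margin_meas (P : (∀ i, α i) → ℝ) (S : Finset (Fin n)) {x y : ∀ i, α i}
    (hxy : ∀ i ∈ S, x i = y i) : margin P S x = margin P S y := by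
  refine Finset.sum_congr rfl fun z _ => ?_
  have h : (∀ i ∈ S, z i = x i) ↔ (∀ i ∈ S, z i = y i) :=
    ⟨fun h i hi => (h i hi).trans (hxy i hi), fun h i hi => (h i hi).trans (hxy i hi).symm⟩
  simp only [h]

lemma count_const (S : Finset (Fin n)) (y y' : ∀ i, α i) :
    (∑ x : ∀ i, α i, if ∀ i ∈ S, y i = x i then (1:ℝ) else 0)
      = ∑ x : ∀ i, α i, if ∀ i ∈ S, y' i = x i then (1:ℝ) else 0 := by
  rw [Finset.sum_boole, Finset.sum_boole]
  norm_cast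
  apply Finset.card_nbij' (i := fun (x : ∀ i, α i) j => if j ∈ S then y' j else x j)
    (j := fun (x : ∀ i, α i) j => if j ∈ S then y j else x j)
  · intro x hx
    simp only [Finset.mem_coe, Finset.mem_filter, Finset.mem_univ, true_and] at hx ⊢
    intro i hi; simp [hi]
  · intro x hx
    simp only [Finset.mem_coe, Finset.mem_filter, Finset.mem_univ, true_and] at hx ⊢
    intro i hi; simp [hi]
  · intro x hx
    simp only [Finset.mem_coe, Finset.mem_filter, Finset.mem_univ, true_and] at hx
    funext j
    by_cases hj : j ∈ S
    · simp [hj, hx j hj]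
    · simp [hj]
  · intro x hx
    simp only [Finset.mem_coe, Finset.mem_filter, Finset.mem_univ, true_and] at hx
    funext j
    by_cases hj : j ∈ S
    · simp [hj, hx j hj]
    · simp [hj]

lemma margin_swap (R G : (∀ i, α i) → ℝ) (S : Finset (Fin n)) (y₀ : ∀ i, α i)
    (hG : ∀ x y, (∀ i ∈ S, x i = y i) → G x = G y) :
    (∑ x, margin R S x * G x)
      = (∑ x : ∀ i, α i, if ∀ i ∈ S, y₀ i = x i then (1:ℝ) else 0) * (∑ x, R x * G x) := by
  unfold margin
  conv_lhs => simp only [Finset.sum_mul, ite_mul, zero_mul]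
  conv_lhs => rw [Finset.sum_comm]
  have key : ∀ y : ∀ i, α i, (∑ x : ∀ i, α i, if ∀ i ∈ S, y i = x i then R y * G x else 0)
      = (∑ x : ∀ i, α i, if ∀ i ∈ S, y₀ i = x i then (1:ℝ) else 0) * (R y * G y) := by
    intro y
    rw [count_const S y₀ y]
    calc (∑ x : ∀ i, α i, if ∀ i ∈ S, y i = x i then R y * G x else 0)
        = ∑ x : ∀ i, α i, (if ∀ i ∈ S, y i = x i then (1:ℝ) else 0) * (R y * G y) := by
          refine Finset.sum_congr rfl fun x _ => ?_
          by_cases h : ∀ i ∈ S, y i = x i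
          · simp only [if_pos h, one_mul]
            rw [hG x y (fun i hi => (h i hi).symm)]
          · simp [h]
      _ = (∑ x : ∀ i, α i, if ∀ i ∈ S, y i = x i then (1:ℝ) else 0) * (R y * G y) :=
          (Finset.sum_mul _ _ _).symm
  simp_rw [key]
  rw [← Finset.mul_sum]

end FTAux

/-- Factorization transfer: if `D_KL(P ‖ Q) ≤ ε` and `Q` factorizes exactly
according to a DAG `G` (compatible with the ordering), then `P` approximately
factorizes according to `G`: `D_KL(P ‖ Πᵢ P[Xᵢ|X_{pa_G(i)}]) ≤ ε`. -/
theorem factorization_transfer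
    {n : ℕ} {α : Fin n → Type*} [∀ i, Fintype (α i)]
    (P Q : (∀ i, α i) → ℝ)
    (hP0 : ∀ x, 0 ≤ P x) (hP1 : ∑ x, P x = 1)
    (hQ0 : ∀ x, 0 ≤ Q x) (hQ1 : ∑ x, Q x = 1)
    (hsupp : ∀ x, P x ≠ 0 → Q x ≠ 0)
    (pa : Fin n → Finset (Fin n)) (hc : ∀ i, ∀ j ∈ pa i, j < i)
    (hfQ : Factorizes Q pa)
    (ε : ℝ) (hKL : KL P Q ≤ ε) :
    klFact P pa ≤ ε := by
  -- the space is nonempty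
  have hne : Nonempty (∀ i, α i) := by
    by_contra h
    rw [not_nonempty_iff] at h
    rw [Finset.sum_eq_zero (fun x _ => (h.false x).elim)] at hP1
    exact one_ne_zero hP1.symm
  obtain ⟨y₀⟩ := hne
  -- counting constant
  set c : Finset (Fin n) → ℝ :=
    fun S => ∑ x : ∀ i, α i, if ∀ i ∈ S, y₀ i = x i then (1:ℝ) else 0 with hc_def
  have hc1 : ∀ S, 1 ≤ c S := by
    intro S
    have h := Finset.single_le_sum
      (f := fun x : ∀ i, α i => if (∀ i ∈ S, y₀ i = x i) then (1:ℝ) else 0)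
      (fun x _ => by split <;> norm_num)
      (Finset.mem_univ y₀)
    simpa [hc_def] using h
  have hcpos : ∀ S, 0 < c S := fun S => lt_of_lt_of_le one_pos (hc1 S)
  -- positivity of margins on the support of P
  have hmP : ∀ (S : Finset (Fin n)) (x), P x ≠ 0 → 0 < margin P S x := fun S x hx =>
    lt_of_lt_of_le (lt_of_le_of_ne (hP0 x) (Ne.symm hx)) (self_le_margin P hP0 S x)
  have hmQ : ∀ (S : Finset (Fin n)) (x), P x ≠ 0 → 0 < margin Q S x := fun S x hx =>
    lt_of_lt_of_le (lt_of_le_of_ne (hQ0 x) (Ne.symm (hsupp x hx))) (self_le_margin Q hQ0 S x)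
  -- the conditional-KL terms
  set D : Fin n → ℝ := fun i =>
    ∑ x, P x * (Real.log (condP P i (pa i) x) - Real.log (condP Q i (pa i) x)) with hD_def
  -- decomposition of KL
  have decomp : KL P Q = klFact P pa + ∑ i, D i := by
    have point : ∀ x, P x * Real.log (P x / Q x)
        = P x * Real.log (P x / ∏ i, condP P i (pa i) x)
          + ∑ i, P x * (Real.log (condP P i (pa i) x) - Real.log (condP Q i (pa i) x)) := by
      intro x
      by_cases hx : P x = 0
      · simp [hx]
      · have hQx : Q x ≠ 0 := hsupp x hx
        have haP : ∀ i : Fin n, condP P i (pa i) x ≠ 0 := fun i =>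
          ne_of_gt (div_pos (hmP _ x hx) (hmP _ x hx))
        have haQ : ∀ i : Fin n, condP Q i (pa i) x ≠ 0 := fun i =>
          ne_of_gt (div_pos (hmQ _ x hx) (hmQ _ x hx))
        have hprodP : (∏ i, condP P i (pa i) x) ≠ 0 :=
          Finset.prod_ne_zero_iff.2 fun i _ => haP i
        have hlogQ : Real.log (Q x) = ∑ i, Real.log (condP Q i (pa i) x) := by
          rw [hfQ x, Real.log_prod (fun i _ => haQ i)]
        have hlogprod : Real.log (∏ i, condP P i (pa i) x)
            = ∑ i, Real.log (condP P i (pa i) x) :=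
          Real.log_prod (fun i _ => haP i)
        have h1 : ∑ i, P x * (Real.log (condP P i (pa i) x) - Real.log (condP Q i (pa i) x))
            = P x * ((∑ i, Real.log (condP P i (pa i) x))
                - ∑ i, Real.log (condP Q i (pa i) x)) := by
          rw [← Finset.sum_sub_distrib, Finset.mul_sum]
        rw [Real.log_div hx hQx, Real.log_div hx hprodP, hlogQ, hlogprod, h1]
        ring
    calc KL P Q = ∑ x, (P x * Real.log (P x / ∏ i, condP P i (pa i) x)
          + ∑ i, P x * (Real.log (condP P i (pa i) x) - Real.log (condP Q i (pa i) x))) := by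
          unfold KL; exact Finset.sum_congr rfl fun x _ => point x
      _ = klFact P pa + ∑ i, D i := by
          rw [Finset.sum_add_distrib, Finset.sum_comm]
          rfl
  -- each D i is nonnegative
  have hDpos : ∀ i, 0 ≤ D i := by
    intro i
    set S := pa i with hS
    set T := insert i (pa i) with hT
    have hST : S ⊆ T := Finset.subset_insert _ _
    -- the comparison function
    set G : (∀ i, α i) → ℝ := fun x =>
      if margin P T x = 0 ∨ margin Q S x = 0 then 0
      else (margin P S x * margin Q T x) / (margin P T x * margin Q S x) with hG_def
    set K : (∀ i, α i) → ℝ := fun x =>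
      if margin Q S x = 0 then 0 else margin P S x / margin Q S x with hK_def
    have hGmeas : ∀ x y, (∀ j ∈ T, x j = y j) → G x = G y := by
      intro x y hxy
      have hS' : ∀ j ∈ S, x j = y j := fun j hj => hxy j (hST hj)
      simp only [hG_def, margin_meas P T hxy, margin_meas Q T hxy,
        margin_meas P S hS', margin_meas Q S hS']
    have hKmeasS : ∀ x y, (∀ j ∈ S, x j = y j) → K x = K y := by
      intro x y hxy
      simp only [hK_def, margin_meas P S hxy, margin_meas Q S hxy]
    have hKmeasT : ∀ x y, (∀ j ∈ T, x j = y j) → K x = K y := fun x y hxy =>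
      hKmeasS x y (fun j hj => hxy j (hST hj))
    -- pointwise bound
    have hpoint : ∀ x, P x * (1 - G x)
        ≤ P x * (Real.log (condP P i (pa i) x) - Real.log (condP Q i (pa i) x)) := by
      intro x
      by_cases hx : P x = 0
      · simp [hx]
      · have hPT := hmP T x hx
        have hPS := hmP S x hx
        have hQT := hmQ T x hx
        have hQS := hmQ S x hx
        have hGx : G x = (margin P S x * margin Q T x) / (margin P T x * margin Q S x) := by
          simp only [hG_def]
          rw [if_neg]
          push_neg
          exact ⟨ne_of_gt hPT, ne_of_gt hQS⟩
        have haP : condP P i (pa i) x = margin P T x / margin P S x := rfl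
        have haQ : condP Q i (pa i) x = margin Q T x / margin Q S x := rfl
        have hratio : 0 < (margin P S x * margin Q T x) / (margin P T x * margin Q S x) :=
          div_pos (mul_pos hPS hQT) (mul_pos hPT hQS)
        have hlog := Real.log_le_sub_one_of_pos hratio
        have hlogeq : Real.log ((margin P S x * margin Q T x) / (margin P T x * margin Q S x))
            = Real.log (condP Q i (pa i) x) - Real.log (condP P i (pa i) x) := by
          rw [haP, haQ, Real.log_div (ne_of_gt (mul_pos hPS hQT)) (ne_of_gt (mul_pos hPT hQS)),
            Real.log_mul (ne_of_gt hPS) (ne_of_gt hQT),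
            Real.log_mul (ne_of_gt hPT) (ne_of_gt hQS),
            Real.log_div (ne_of_gt hQT) (ne_of_gt hQS),
            Real.log_div (ne_of_gt hPT) (ne_of_gt hPS)]
          ring
        have : 1 - G x ≤ Real.log (condP P i (pa i) x) - Real.log (condP Q i (pa i) x) := by
          rw [hGx]
          nlinarith [hlog, hlogeq]
        exact mul_le_mul_of_nonneg_left this (hP0 x)
    -- Z ≤ 1
    have hZ : ∑ x, P x * G x ≤ 1 := by
      have step1 : (∑ x, margin P T x * G x) = c T * ∑ x, P x * G x :=
        margin_swap P G T y₀ hGmeas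
      have step2 : ∀ x, margin P T x * G x ≤ margin Q T x * K x := by
        intro x
        by_cases h : margin P T x = 0 ∨ margin Q S x = 0
        · have hG0 : G x = 0 := by simp only [hG_def]; rw [if_pos h]
          rw [hG0, mul_zero]
          have hK0 : 0 ≤ K x := by
            simp only [hK_def]
            split
            · exact le_rfl
            · exact div_nonneg (margin_nonneg P hP0 S x) (margin_nonneg Q hQ0 S x)
          exact mul_nonneg (margin_nonneg Q hQ0 T x) hK0
        · push_neg at h
          obtain ⟨hPT, hQS⟩ := h
          have hGx : G x = (margin P S x * margin Q T x) / (margin P T x * margin Q S x) := by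
            simp only [hG_def]; rw [if_neg]; push_neg; exact ⟨hPT, hQS⟩
          have hKx : K x = margin P S x / margin Q S x := by
            simp only [hK_def]; rw [if_neg hQS]
          rw [hGx, hKx]
          have heq : margin P T x * (margin P S x * margin Q T x / (margin P T x * margin Q S x))
              = margin Q T x * (margin P S x / margin Q S x) := by
            field_simp
          rw [heq]
      have step3 : (∑ x, margin Q T x * K x) = c T * ∑ x, Q x * K x :=
        margin_swap Q K T y₀ hKmeasT
      have step4 : (∑ x, margin Q S x * K x) = c S * ∑ x, Q x * K x :=
        margin_swap Q K S y₀ hKmeasS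
      have step5 : (∑ x, margin Q S x * K x) ≤ ∑ x, margin P S x := by
        refine Finset.sum_le_sum fun x _ => ?_
        by_cases h : margin Q S x = 0
        · have : K x = 0 := by simp only [hK_def]; rw [if_pos h]
          rw [this, mul_zero]
          exact margin_nonneg P hP0 S x
        · have : K x = margin P S x / margin Q S x := by
            simp only [hK_def]; rw [if_neg h]
          rw [this, mul_div_cancel₀]
          exact h
      have step6 : (∑ x, margin P S x) = c S := by
        have h := margin_swap P (fun _ => (1:ℝ)) S y₀ (fun _ _ _ => rfl)
        simp only [mul_one] at h
        rw [hP1, mul_one] at h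
        exact h
      -- combine
      have hW : ∑ x, Q x * K x ≤ 1 := by
        have h1 : c S * ∑ x, Q x * K x ≤ c S * 1 := by
          rw [mul_one, ← step4]
          exact step5.trans (le_of_eq step6)
        exact le_of_mul_le_mul_left h1 (hcpos S)
      have hZW : c T * ∑ x, P x * G x ≤ c T * ∑ x, Q x * K x := by
        rw [← step1, ← step3]
        exact Finset.sum_le_sum fun x _ => step2 x
      have := le_of_mul_le_mul_left hZW (hcpos T)
      linarith
    have hsum : ∑ x, P x * (1 - G x) ≤ D i := Finset.sum_le_sum fun x _ => hpoint x
    have hexp : ∑ x, P x * (1 - G x) = 1 - ∑ x, P x * G x := by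
      simp_rw [mul_sub, mul_one]
      rw [Finset.sum_sub_distrib, hP1]
    rw [hexp] at hsum
    linarith
  have hDsum : 0 ≤ ∑ i, D i := Finset.sum_nonneg fun i _ => hDpos i
  linarith [decomp ▸ hKL]
end
end

section
/- (Naturality implies maximality among redunds, exact case) If Λ is an exact natural latent over X₁, X₂, then for any random variable Λ' which is a redund over X₁, X₂ (i.e., Λ' = g₁(X₁) = g₂(X₂) a.s.), Λ' is almost surely a deterministic function of Λ. -/
open scoped Classical BigOperators

noncomputable section

/-- Naturality implies maximality among redunds (exact case): if Λ is an exact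
natural latent over X₁, X₂, then any redund Λ' over X₁, X₂ is almost surely a
deterministic function of Λ. -/
theorem naturality_implies_maximality
    {Ω α β γ δ : Type*} [Fintype Ω] [Fintype α] [Fintype β]
    (p : Ω → ℝ) (hp : ∀ ω, 0 ≤ p ω) (hsum : ∑ ω, p ω = 1)
    (X1 : Ω → α) (X2 : Ω → β) (L : Ω → γ) (L' : Ω → δ)
    (hmedL : Mediates p X1 X2 L)
    (f1 : α → γ) (f2 : β → γ)
    (hLf1 : ∀ ω, p ω ≠ 0 → L ω = f1 (X1 ω)) (hLf2 : ∀ ω, p ω ≠ 0 → L ω = f2 (X2 ω))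
    (g1 : α → δ) (g2 : β → δ)
    (hL'g1 : ∀ ω, p ω ≠ 0 → L' ω = g1 (X1 ω)) (hL'g2 : ∀ ω, p ω ≠ 0 → L' ω = g2 (X2 ω)) :
    ∃ g : γ → δ, ∀ ω, p ω ≠ 0 → L' ω = g (L ω) := by
  -- basic facts about prob
  have prob_nonneg : ∀ E : Ω → Prop, 0 ≤ prob p E := by
    intro E
    apply Finset.sum_nonneg
    intro ω _
    split <;> [exact hp ω; exact le_rfl]
  have prob_pos : ∀ E : Ω → Prop, (∃ ω, p ω ≠ 0 ∧ E ω) → 0 < prob p E := by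
    rintro E ⟨ω, hω, hE⟩
    have : 0 < p ω := lt_of_le_of_ne (hp ω) (Ne.symm hω)
    calc (0:ℝ) < p ω := this
      _ = if E ω then p ω else 0 := by simp [hE]
      _ ≤ prob p E := by
        apply Finset.single_le_sum (f := fun ω => if E ω then p ω else 0)
        · intro i _; split <;> [exact hp i; exact le_rfl]
        · exact Finset.mem_univ ω
  have prob_wit : ∀ E : Ω → Prop, 0 < prob p E → ∃ ω, p ω ≠ 0 ∧ E ω := by
    intro E hE
    by_contra h
    push_neg at h
    have : prob p E = 0 := by
      apply Finset.sum_eq_zero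
      intro ω _
      split
      · by_contra hne
        exact h ω hne ‹E ω›
      · rfl
    simp [this] at hE
  -- key: same L value implies same L' value
  have key : ∀ ω ω', p ω ≠ 0 → p ω' ≠ 0 → L ω = L ω' → L' ω = L' ω' := by
    intro ω ω' hω hω' hL
    set l := L ω with hl
    have h1 : 0 < prob p (fun τ => X1 τ = X1 ω ∧ L τ = l) :=
      prob_pos _ ⟨ω, hω, rfl, rfl⟩
    have h2 : 0 < prob p (fun τ => X2 τ = X2 ω' ∧ L τ = l) :=
      prob_pos _ ⟨ω', hω', rfl, hL.symm⟩
    have hmed := hmedL (X1 ω) (X2 ω') l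
    have h3 : 0 < prob p (fun τ => X1 τ = X1 ω ∧ X2 τ = X2 ω' ∧ L τ = l) := by
      by_contra h
      push_neg at h
      have h0 : prob p (fun τ => X1 τ = X1 ω ∧ X2 τ = X2 ω' ∧ L τ = l) = 0 :=
        le_antisymm h (prob_nonneg _)
      rw [h0, zero_mul] at hmed
      exact absurd hmed.symm (ne_of_gt (mul_pos h1 h2))
    obtain ⟨τ, hτ, hx1, hx2, hlτ⟩ := prob_wit _ h3
    calc L' ω = g1 (X1 ω) := hL'g1 ω hω
      _ = g1 (X1 τ) := by rw [hx1]
      _ = L' τ := (hL'g1 τ hτ).symm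
      _ = g2 (X2 τ) := hL'g2 τ hτ
      _ = g2 (X2 ω') := by rw [hx2]
      _ = L' ω' := (hL'g2 ω' hω').symm
  have hex : ∃ ω, p ω ≠ 0 := by
    by_contra h
    push_neg at h
    simp [h] at hsum
  obtain ⟨ω₀, hω₀⟩ := hex
  refine ⟨fun l => if h : ∃ ω, p ω ≠ 0 ∧ L ω = l then L' h.choose else L' ω₀, ?_⟩
  intro ω hω
  have h : ∃ τ, p τ ≠ 0 ∧ L τ = L ω := ⟨ω, hω, rfl⟩
  simp only [dif_pos h]
  exact key ω h.choose hω h.choose_spec.1 h.choose_spec.2.symm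
end
end

section
/- If Λ' is an exact redund over X₁,…,Xₙ (n ≥ 2), i.e., Λ' = fⱼ(Xⱼ) a.s. for each j, and X₁,…,Xₙ are mutually independent given Λ with all conditionals well-defined, then Λ' is a deterministic function of Λ almost surely (Mediator Determines Redund for n observables). -/
open scoped Classical BigOperators

noncomputable section

lemma prob_ne_zero_of_witness {Ω : Type*} [Fintype Ω] (p : Ω → ℝ) (hp : ∀ ω, 0 ≤ p ω)
    (E : Ω → Prop) {ω : Ω} (hω : E ω) (hpω : p ω ≠ 0) : prob p E ≠ 0 := by
  have hpos : 0 < prob p E := by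
    apply Finset.sum_pos' (fun i _ => by split_ifs with h; exacts [hp i, le_refl 0])
    refine ⟨ω, Finset.mem_univ ω, ?_⟩
    rw [if_pos hω]
    exact lt_of_le_of_ne (hp ω) (Ne.symm hpω)
  exact ne_of_gt hpos

lemma exists_witness_of_prob_ne_zero {Ω : Type*} [Fintype Ω] (p : Ω → ℝ)
    (E : Ω → Prop) (h : prob p E ≠ 0) : ∃ ω, E ω ∧ p ω ≠ 0 := by
  by_contra hc
  push_neg at hc
  apply h
  apply Finset.sum_eq_zero
  intro ω _
  split_ifs with hE
  · by_contra hpω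
    exact hpω (hc ω hE)
  · rfl

/-- Mediator Determines Redund for n observables (exact case): if X₁,…,Xₙ
(n ≥ 2) are mutually independent given Λ with all conditionals well-defined, and
Λ' = fⱼ(Xⱼ) a.s. for each j, then Λ' is a deterministic function of Λ a.s. -/
theorem mediator_determines_redund_n
    {Ω : Type*} [Fintype Ω] {n : ℕ} (hn : 2 ≤ n)
    {α : Fin n → Type*} {γ δ : Type*}
    (p : Ω → ℝ) (hp : ∀ ω, 0 ≤ p ω) (hsum : ∑ ω, p ω = 1)
    (X : ∀ j, Ω → α j) (L : Ω → γ) (L' : Ω → δ)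
    (hL : ∀ l, prob p (fun ω => L ω = l) ≠ 0)
    (hmed : ∀ (x : ∀ j, α j) (l : γ),
      prob p (fun ω => (∀ j, X j ω = x j) ∧ L ω = l) * (prob p (fun ω => L ω = l)) ^ (n - 1)
        = ∏ j, prob p (fun ω => X j ω = x j ∧ L ω = l))
    (f : ∀ j, α j → δ)
    (hf : ∀ j, ∀ ω, p ω ≠ 0 → L' ω = f j (X j ω)) :
    ∃ g : γ → δ, ∀ ω, p ω ≠ 0 → L' ω = g (L ω) := by
  have hwit : ∀ l : γ, ∃ ω, (L ω = l) ∧ p ω ≠ 0 :=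
    fun l => exists_witness_of_prob_ne_zero p _ (hL l)
  choose w hw1 hw2 using hwit
  refine ⟨fun l => L' (w l), ?_⟩
  intro ω hpω
  set l := L ω with hl
  have j0 : Fin n := ⟨0, by omega⟩
  have j1 : Fin n := ⟨1, by omega⟩
  set x : ∀ j, α j := fun j => if (j : ℕ) = 0 then X j ω else X j (w l) with hx
  have hfac : ∀ j : Fin n, prob p (fun ω' => X j ω' = x j ∧ L ω' = l) ≠ 0 := by
    intro j
    by_cases hj : (j : ℕ) = 0
    · exact prob_ne_zero_of_witness p hp _ (ω := ω) ⟨by simp [hx, hj], rfl⟩ hpω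
    · exact prob_ne_zero_of_witness p hp _ (ω := w l) ⟨by simp [hx, hj], hw1 l⟩ (hw2 l)
  have hprod : (∏ j, prob p (fun ω' => X j ω' = x j ∧ L ω' = l)) ≠ 0 :=
    Finset.prod_ne_zero_iff.mpr (fun j _ => hfac j)
  have hjoint : prob p (fun ω' => (∀ j, X j ω' = x j) ∧ L ω' = l) ≠ 0 := by
    intro h0
    rw [← hmed x l, h0, zero_mul] at hprod
    exact hprod rfl
  obtain ⟨ω', ⟨hX', hL'⟩, hpω'⟩ := exists_witness_of_prob_ne_zero p _ hjoint
  have key : ∀ j : Fin n, L' ω' = f j (X j ω') := fun j => hf j ω' hpω'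
  have h0 : L' ω' = L' ω := by
    have e : X ⟨0, by omega⟩ ω' = X ⟨0, by omega⟩ ω := by
      rw [hX' ⟨0, by omega⟩]; simp [hx]
    rw [key ⟨0, by omega⟩, e, ← hf ⟨0, by omega⟩ ω hpω]
  have h1 : L' ω' = L' (w l) := by
    have e : X ⟨1, by omega⟩ ω' = X ⟨1, by omega⟩ (w l) := by
      rw [hX' ⟨1, by omega⟩]; simp [hx]
    rw [key ⟨1, by omega⟩, e, ← hf ⟨1, by omega⟩ (w l) (hw2 l)]
  simp only []
  rw [← h0, h1]
end
end
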